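/- Let (A,▷,◁) be an L-dendriform algebra over a field of characteristic zero. Define the transpose operations x▷ᵗy = x▷y and x◁ᵗy = −y◁x. Then (A,▷ᵗ,◁ᵗ) is an L-dendriform algebra; moreover, its associated horizontal pre-Lie product x▷ᵗy + x◁ᵗy equals the associated vertical pre-Lie product x▷y − y◁x of (A,▷,◁), and its associated vertical pre-Lie product x▷ᵗy − y◁ᵗx equals the associated horizontal pre-Lie product x▷y + x◁y of (A,▷,◁). -/

import Mathlib

/-- An L-dendriform algebra structure: two bilinear operations `tr` (`▷`) and `tl` (`◁`)
satisfying the two L-dendriform identities. -/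
def IsLDendriform {K A : Type*} [Field K] [AddCommGroup A] [Module K A]
    (tr tl : A →ₗ[K] A →ₗ[K] A) : Prop :=
  (∀ x y z : A, tr x (tr y z) =
      tr (tr x y) z + tr (tl x y) z + tr y (tr x z) - tr (tl y x) z - tr (tr y x) z) ∧
  (∀ x y z : A, tr x (tl y z) =
      tl (tr x y) z + tl y (tr x z) + tl y (tl x z) - tl (tl y x) z)

theorem IsLDendriform.transpose {K A : Type*} [Field K] [AddCommGroup A] [Module K A]
    {tr tl : A →ₗ[K] A →ₗ[K] A} (h : IsLDendriform tr tl) : IsLDendriform tr (-tl.flip) := by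
  obtain ⟨h_tr, h_tl⟩ := h
  simp only [IsLDendriform, LinearMap.neg_apply, LinearMap.flip_apply, map_neg]
  refine ⟨fun x y z => ?_, fun x y z => ?_⟩
  · rw [h_tr x y z]; abel
  · rw [h_tl x z y]; abel

theorem transpose_LDendriform_general {K A : Type*} [Field K]
    [AddCommGroup A] [Module K A]
    (tr tl : A →ₗ[K] A →ₗ[K] A) (h : IsLDendriform tr tl) :
    IsLDendriform tr (-tl.flip) ∧
    (∀ x y : A, tr x y + (-tl.flip) x y = tr x y - tl y x) ∧
    (∀ x y : A, tr x y - (-tl.flip) y x = tr x y + tl x y) :=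
  ⟨h.transpose, fun x y => by simp [sub_eq_add_neg], fun x y => by simp⟩

/-- The transpose `(A,▷ᵗ,◁ᵗ)` with `x▷ᵗy = x▷y` and `x◁ᵗy = −y◁x`
(i.e. `(tr, -tl.flip)`) of an L-dendriform algebra `(A,▷,◁)` is again an L-dendriform
algebra; its horizontal pre-Lie product is the vertical pre-Lie product of
`(A,▷,◁)`, and its vertical pre-Lie product is the horizontal one of `(A,▷,◁)`. -/
theorem transpose_LDendriform {K A : Type*} [Field K] [CharZero K]
    [AddCommGroup A] [Module K A]
    (tr tl : A →ₗ[K] A →ₗ[K] A) (h : IsLDendriform tr tl) :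
    IsLDendriform tr (-tl.flip) ∧
    (∀ x y : A, tr x y + (-tl.flip) x y = tr x y - tl y x) ∧
    (∀ x y : A, tr x y - (-tl.flip) y x = tr x y + tl x y) :=
  transpose_LDendriform_general tr tl h
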